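/- Let K ⊆ ℕ_min^n be a finitely generated subsemimodule. Then for all matrices A ∈ ℕ_min^{n×n} and B ∈ ℕ_min^{n×q}, the maximal geometrically (A,B)-invariant semimodule K* contained in K equals X_ω = ⋂_{r≥1} X_r, where X₁ = K and X_{r+1} = φ(X_r). -/

import Mathlib

/-- The tropical matrix–vector product over `ℕ_min = (ℕ ∪ {+∞}, min, +)`:
`(Ax)_i = min_j (A_{ij} + x_j)`. -/
def minMulVec {m k : ℕ} (A : Matrix (Fin m) (Fin k) (WithTop ℕ))
    (x : Fin k → WithTop ℕ) : Fin m → WithTop ℕ :=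
  fun i => Finset.univ.inf fun j => A i j + x j

/-- A subsemimodule of `ℕ_min^n`: contains the zero vector `(+∞,…,+∞)`, is closed
under entrywise min, and under addition of a scalar to all entries. -/
def IsSubsemimoduleMin {m : ℕ} (X : Set (Fin m → WithTop ℕ)) : Prop :=
  (fun _ => ⊤) ∈ X ∧ (∀ x ∈ X, ∀ y ∈ X, x ⊓ y ∈ X) ∧
    ∀ (c : WithTop ℕ), ∀ x ∈ X, (fun i => c + x i) ∈ X

/-- `Kstar A B K`: the set of initial states `x₀` for which some control sequence
`u(k)`, `k ≥ 1`, makes the trajectory `x(0) = x₀`, `x(k) = min(A x(k−1), B u(k))`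
stay in `K` forever. -/
def KstarMin {n q : ℕ} (A : Matrix (Fin n) (Fin n) (WithTop ℕ))
    (B : Matrix (Fin n) (Fin q) (WithTop ℕ)) (K : Set (Fin n → WithTop ℕ)) :
    Set (Fin n → WithTop ℕ) :=
  {x₀ | ∃ (u : ℕ → Fin q → WithTop ℕ) (x : ℕ → Fin n → WithTop ℕ),
    x 0 = x₀ ∧ (∀ k : ℕ, x (k + 1) = minMulVec A (x k) ⊓ minMulVec B (u (k + 1))) ∧
    ∀ k : ℕ, x k ∈ K}

/-- `φ(X) = X ∩ A⁻¹(X ⊖ Im B)`, where `A⁻¹(Y) = {u : Au ∈ Y}` and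
`Z ⊖ Y = {u : ∃ y ∈ Y, min(u, y) ∈ Z}`. -/
def PhiMin {n q : ℕ} (A : Matrix (Fin n) (Fin n) (WithTop ℕ))
    (B : Matrix (Fin n) (Fin q) (WithTop ℕ)) (X : Set (Fin n → WithTop ℕ)) :
    Set (Fin n → WithTop ℕ) :=
  X ∩ {u | minMulVec A u ∈
    {w | ∃ y ∈ {v | ∃ z : Fin q → WithTop ℕ, v = minMulVec B z}, w ⊓ y ∈ X}}

/-- The sequence `X₁ = K`, `X_{r+1} = φ(X_r)`; here `XseqMin A B K r` is `X_{r+1}`. -/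
def XseqMin {n q : ℕ} (A : Matrix (Fin n) (Fin n) (WithTop ℕ))
    (B : Matrix (Fin n) (Fin q) (WithTop ℕ)) (K : Set (Fin n → WithTop ℕ)) :
    ℕ → Set (Fin n → WithTop ℕ)
  | 0 => K
  | r + 1 => PhiMin A B (XseqMin A B K r)

/-!
A trajectory starting in `K*` stays in every `X_r`, by induction on `r`. Conversely, `X_ω` is
geometrically invariant, hence contained in `K*`. Since `K = Im Q` and `M (⨅ y_r) = ⨅ M y_r`,
`M (⨆ y_r) = ⨆ M y_r` for increasing `y_r`, every `X_r` is closed under infima of sequences and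
`K` under suprema of increasing sequences. If `x ∈ X_{r+1}` for all `r`, with controls `u_r`,
the tail infima `⨅_{s ≥ r} u_s` are again controls at level `r`, now increasing in `r`, and their
supremum `z` is one control serving all levels: `A x ⊓ B z = ⨆_r (A x ⊓ B (⨅_{s ≥ r} u_s))`, a
supremum of an increasing sequence with `r`-th term in `X_r`. Such suprema lie in every `X_t`,
by induction on `t` using the same tail-infimum construction.
-/

section MinMulVec

variable {m k : ℕ} (M : Matrix (Fin m) (Fin k) (WithTop ℕ))

lemma minMulVec_apply (x : Fin k → WithTop ℕ) (i : Fin m) :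
    minMulVec M x i = ⨅ j, M i j + x j :=
  Finset.inf_univ_eq_iInf _

lemma minMulVec_mono : Monotone (minMulVec M) := fun _ _ h i => by
  simp only [minMulVec_apply]
  exact iInf_mono fun j => add_le_add le_rfl (h j)

lemma minMulVec_iInf {ι : Sort*} (x : ι → Fin k → WithTop ℕ) :
    minMulVec M (⨅ r, x r) = ⨅ r, minMulVec M (x r) := by
  ext i
  simp only [minMulVec_apply, iInf_apply]
  rw [iInf_comm]
  exact iInf_congr fun j => ENat.add_iInf

lemma minMulVec_iSup_of_monotone {ι : Type*} [Preorder ι] [IsDirectedOrder ι] [Nonempty ι]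
    {x : ι → Fin k → WithTop ℕ} (hx : Monotone x) :
    minMulVec M (⨆ r, x r) = ⨆ r, minMulVec M (x r) := by
  ext i
  simp only [minMulVec_apply, iSup_apply]
  exact (iInf_congr fun j => ENat.add_iSup _).trans
    (iSup_iInf_of_monotone (f := fun j r => M i j + x r j)
      fun j _ _ h => add_le_add le_rfl (hx h j)).symm

end MinMulVec

def SeqInfClosed {α : Type*} [CompleteLattice α] (X : Set α) : Prop :=
  ∀ f : ℕ → α, (∀ r, f r ∈ X) → ⨅ r, f r ∈ X

def MonotoneSeqSupClosed {α : Type*} [CompleteLattice α] (X : Set α) : Prop :=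
  ∀ f : ℕ → α, Monotone f → (∀ r, f r ∈ X) → ⨆ r, f r ∈ X

lemma monotone_iInf_nat_add {α : Type*} [CompleteLattice α] (u : ℕ → α) :
    Monotone fun r => ⨅ s, u (s + r) := fun r r' h => by
  simp only [← iInf_ge_eq_iInf_nat_add]
  exact biInf_mono fun _ => h.trans

lemma Monotone.iInf_nat_add_eq {α : Type*} [CompleteLattice α] {a : ℕ → α} (ha : Monotone a)
    (r : ℕ) : ⨅ s, a (s + r) = a r :=
  le_antisymm (by simpa using iInf_le (fun s => a (s + r)) 0)
    (le_iInf fun s => ha (Nat.le_add_left r s))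

section MinMulVecRange

variable {m k : ℕ} (M : Matrix (Fin m) (Fin k) (WithTop ℕ))

lemma seqInfClosed_range_minMulVec : SeqInfClosed (Set.range (minMulVec M)) := by
  intro f hf
  choose y hy using hf
  exact ⟨⨅ r, y r, by simp only [minMulVec_iInf, hy]⟩

/-- Each `v ∈ Im M` has a least preimage `sInf {y | v ≤ M y}`, and it depends monotonically
on `v`; the least preimages of an increasing sequence converge to a preimage of its limit. -/
lemma monotoneSeqSupClosed_range_minMulVec : MonotoneSeqSupClosed (Set.range (minMulVec M)) := by
  intro f hf hmem
  set y : ℕ → Fin k → WithTop ℕ := fun r => sInf {y | f r ≤ minMulVec M y}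
  have hy : ∀ r, minMulVec M (y r) = f r := by
    intro r
    obtain ⟨y₀, hy₀⟩ := hmem r
    simp only [y, sInf_eq_iInf', minMulVec_iInf]
    exact le_antisymm ((iInf_le _ ⟨y₀, hy₀.ge⟩).trans hy₀.le) (le_iInf fun y => y.2)
  have hy_mono : Monotone y := fun r s h => sInf_le_sInf fun z hz => (hf h).trans hz
  exact ⟨⨆ r, y r, by simp only [minMulVec_iSup_of_monotone M hy_mono, hy]⟩

end MinMulVecRange

section Phi

variable {n q : ℕ} (A : Matrix (Fin n) (Fin n) (WithTop ℕ))
  (B : Matrix (Fin n) (Fin q) (WithTop ℕ))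

def IsGeomInvariantMin (X : Set (Fin n → WithTop ℕ)) : Prop :=
  ∀ x ∈ X, ∃ u, minMulVec A x ⊓ minMulVec B u ∈ X

lemma mem_phiMin {X : Set (Fin n → WithTop ℕ)} {x : Fin n → WithTop ℕ} :
    x ∈ PhiMin A B X ↔ x ∈ X ∧ ∃ u, minMulVec A x ⊓ minMulVec B u ∈ X := by
  simp [PhiMin]

lemma SeqInfClosed.phiMin {X : Set (Fin n → WithTop ℕ)} (hX : SeqInfClosed X) :
    SeqInfClosed (PhiMin A B X) := by
  intro f hf
  simp only [mem_phiMin] at hf ⊢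
  choose hfX u hu using hf
  refine ⟨hX f hfX, ⨅ r, u r, ?_⟩
  rw [minMulVec_iInf, minMulVec_iInf, ← iInf_inf_eq]
  exact hX _ hu

variable {K : Set (Fin n → WithTop ℕ)}

lemma xseqMin_antitone : Antitone (XseqMin A B K) :=
  antitone_nat_of_succ_le fun _ => Set.inter_subset_left

lemma SeqInfClosed.xseqMin (hK : SeqInfClosed K) (r : ℕ) : SeqInfClosed (XseqMin A B K r) := by
  induction r with
  | zero => exact hK
  | succ r ih => exact ih.phiMin A B

/-- The controls `u r` witnessing `f r ∈ X_{r+1}` are replaced by their tail infima, which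
still work at level `r` (as `X_r` is closed under infima) and increase with `r`. -/
lemma exists_minMulVec_iSup_inf_eq_iSup (hK_inf : SeqInfClosed K) {f : ℕ → Fin n → WithTop ℕ}
    (hf : Monotone f) (hmem : ∀ r, f r ∈ XseqMin A B K (r + 1)) :
    ∃ (z : Fin q → WithTop ℕ) (g : ℕ → Fin n → WithTop ℕ), Monotone g ∧
      (∀ r, g r ∈ XseqMin A B K r) ∧ minMulVec A (⨆ r, f r) ⊓ minMulVec B z = ⨆ r, g r := by
  choose _ u hu using fun r => (mem_phiMin A B).1 (hmem r)
  set a := fun r => minMulVec A (f r)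
  set b := fun r => minMulVec B (⨅ s, u (s + r))
  have ha : Monotone a := (minMulVec_mono A).comp hf
  have hb : Monotone b := (minMulVec_mono B).comp (monotone_iInf_nat_add u)
  obtain ⟨z, hz⟩ := monotoneSeqSupClosed_range_minMulVec B b hb fun r => ⟨_, rfl⟩
  refine ⟨z, fun r => a r ⊓ b r, ha.inf hb, fun r => ?_, ?_⟩
  · have htail : a r ⊓ b r = ⨅ s, a (s + r) ⊓ minMulVec B (u (s + r)) := by
      rw [iInf_inf_eq, ha.iInf_nat_add_eq, ← minMulVec_iInf]
    show a r ⊓ b r ∈ _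
    rw [htail]
    exact hK_inf.xseqMin A B r _ fun s => xseqMin_antitone A B (Nat.le_add_left r s) (hu (s + r))
  · rw [hz, minMulVec_iSup_of_monotone A hf, iSup_inf_of_monotone ha hb]

lemma iSup_mem_iInter_xseqMin (hK_inf : SeqInfClosed K) (hK_sup : MonotoneSeqSupClosed K)
    {f : ℕ → Fin n → WithTop ℕ} (hf : Monotone f) (hmem : ∀ r, f r ∈ XseqMin A B K r) :
    ⨆ r, f r ∈ ⋂ t, XseqMin A B K t := by
  refine Set.mem_iInter.2 fun t => ?_
  induction t generalizing f with
  | zero => exact hK_sup f hf fun r => xseqMin_antitone A B (Nat.zero_le r) (hmem r)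
  | succ t ih =>
    obtain ⟨z, g, hg, hgmem, hz⟩ := exists_minMulVec_iSup_inf_eq_iSup A B hK_inf
      (fun _ _ h => hf (Nat.add_le_add_right h 1)) fun r => hmem (r + 1)
    rw [hf.iSup_nat_add 1] at hz
    exact (mem_phiMin A B).2 ⟨ih hf hmem, z, hz ▸ ih hg hgmem⟩

lemma isGeomInvariantMin_iInter_xseqMin (hK_inf : SeqInfClosed K)
    (hK_sup : MonotoneSeqSupClosed K) : IsGeomInvariantMin A B (⋂ r, XseqMin A B K r) := by
  intro x hx
  obtain ⟨z, g, hg, hgmem, hz⟩ := exists_minMulVec_iSup_inf_eq_iSup A B hK_inf monotone_const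
    fun r => Set.mem_iInter.1 hx (r + 1)
  rw [iSup_const] at hz
  exact ⟨z, hz ▸ iSup_mem_iInter_xseqMin A B hK_inf hK_sup hg hgmem⟩

lemma kstarMin_subset_xseqMin (r : ℕ) : KstarMin A B K ⊆ XseqMin A B K r := by
  rintro _ ⟨u, x, rfl, hx, hxK⟩
  suffices ∀ r k, x k ∈ XseqMin A B K r from this r 0
  intro r
  induction r with
  | zero => exact hxK
  | succ r ih => exact fun k => (mem_phiMin A B).2 ⟨ih k, u (k + 1), hx k ▸ ih (k + 1)⟩

lemma IsGeomInvariantMin.subset_kstarMin {X : Set (Fin n → WithTop ℕ)}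
    (hX : IsGeomInvariantMin A B X) (hXK : X ⊆ K) : X ⊆ KstarMin A B K := by
  choose! c hc using hX
  intro x₀ hx₀
  set step := fun v => minMulVec A v ⊓ minMulVec B (c v)
  have hstep : ∀ k, step^[k] x₀ ∈ X := by
    intro k
    induction k with
    | zero => exact hx₀
    | succ k ih => exact Function.iterate_succ_apply' step k x₀ ▸ hc _ ih
  refine ⟨fun k => c (step^[k - 1] x₀), fun k => step^[k] x₀, rfl, fun k => ?_,
    fun k => hXK (hstep k)⟩
  simp only [Function.iterate_succ_apply', Nat.add_sub_cancel, step]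

end Phi

theorem kstarMin_eq_xomega_general {n q : ℕ} (K : Set (Fin n → WithTop ℕ))
    (hfg : ∃ (p : ℕ) (Q : Matrix (Fin n) (Fin p) (WithTop ℕ)),
      K = {x | ∃ y : Fin p → WithTop ℕ, x = minMulVec Q y})
    (A : Matrix (Fin n) (Fin n) (WithTop ℕ)) (B : Matrix (Fin n) (Fin q) (WithTop ℕ)) :
    KstarMin A B K = ⋂ r : ℕ, XseqMin A B K r := by
  obtain ⟨p, Q, hK⟩ := hfg
  have hK_range : K = Set.range (minMulVec Q) := by
    simp only [hK, Set.range, eq_comm]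
  refine (Set.subset_iInter fun r => kstarMin_subset_xseqMin A B r).antisymm ?_
  rw [hK_range]
  exact (isGeomInvariantMin_iInter_xseqMin A B (seqInfClosed_range_minMulVec Q)
    (monotoneSeqSupClosed_range_minMulVec Q)).subset_kstarMin A B (Set.iInter_subset _ 0)

/-- For a finitely generated subsemimodule `K ⊆ ℕ_min^n` and all matrices `A`, `B`,
the maximal geometrically `(A,B)`-invariant semimodule `K*` contained in `K` equals
`X_ω = ⋂_r X_r`, where `X₁ = K` and `X_{r+1} = φ(X_r)`. -/
theorem kstarMin_eq_xomega {n q : ℕ} (K : Set (Fin n → WithTop ℕ))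
    (hK : IsSubsemimoduleMin K)
    (hfg : ∃ (p : ℕ) (Q : Matrix (Fin n) (Fin p) (WithTop ℕ)),
      K = {x | ∃ y : Fin p → WithTop ℕ, x = minMulVec Q y})
    (A : Matrix (Fin n) (Fin n) (WithTop ℕ)) (B : Matrix (Fin n) (Fin q) (WithTop ℕ)) :
    KstarMin A B K = ⋂ r : ℕ, XseqMin A B K r :=
  kstarMin_eq_xomega_general K hfg A B
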